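/- Let R be a ring, σ an automorphism of R, δ a σ-derivation, S = R[x; σ, δ], and M a right R-module. If m ∈ M ⊗_R S is a good polynomial of degree k with leading coefficient m_k, then the right S-module mS is isomorphic to ⟨m_k⟩_{σ^k} ⊗_R S, where ⟨m_k⟩_{σ^k} is the cyclic R-submodule generated by m_k inside the σ^k-twisted module M_{σ^k}. -/

import Mathlib

open MulOpposite

/-- `δ` is a `σ`-derivation of the ring `R`. -/
def IsSigmaDeriv {R : Type} [Ring R] (σ : R ≃+* R) (δ : R → R) : Prop :=
  (∀ a b, δ (a + b) = δ a + δ b) ∧ ∀ a b, δ (a * b) = σ a * δ b + δ a * b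

/-- A presentation of the skew polynomial ring `S = R[x; σ, δ]`: `S` is a ring containing an
image of `R` via `ι`, with an element `x` satisfying `x·r = σ(r)·x + δ(r)`, and `S` is free
as a left `R`-module with basis the powers of `x`. -/
structure SkewPoly (R S : Type) [Ring R] [Ring S] (σ : R ≃+* R) (δ : R → R) : Type where
  ι : R →+* S
  x : S
  comm : ∀ r : R, x * ι r = ι (σ r) * x + ι (δ r)
  basis : Function.Bijective fun c : ℕ →₀ R => c.sum fun i a => ι a * x ^ i

/-- A presentation of the induced right `S`-module `M ⊗_R S` of a right `R`-module `M`
(right modules are encoded as modules over the opposite ring): `N` is a right `S`-module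
containing `M` via `j`, compatibly with the right `R`-actions, and every element of `N` is
uniquely a polynomial `∑ (j mᵢ)·xⁱ` with coefficients in `M`. -/
structure Induced (R S M N : Type) [Ring R] [Ring S] [AddCommGroup M] [Module Rᵐᵒᵖ M]
    [AddCommGroup N] [Module Sᵐᵒᵖ N] {σ : R ≃+* R} {δ : R → R}
    (sp : SkewPoly R S σ δ) : Type where
  j : M →+ N
  j_smul : ∀ (r : R) (m : M), j (op r • m) = op (sp.ι r) • j m
  free : Function.Bijective fun c : ℕ →₀ M => c.sum fun i m => op (sp.x ^ i) • j m

variable {R S M N : Type} [Ring R] [Ring S] [AddCommGroup M] [Module Rᵐᵒᵖ M]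
  [AddCommGroup N] [Module Sᵐᵒᵖ N] {σ : R ≃+* R} {δ : R → R}

/-- The polynomial `∑ (j mᵢ)·xⁱ` in `M ⊗_R S` with coefficient family `c`. -/
def pol (sp : SkewPoly R S σ δ) (im : Induced R S M N sp) (c : ℕ →₀ M) : N :=
  c.sum fun i m => op (sp.x ^ i) • im.j m

/-- `ν ∈ M ⊗_R S` has degree exactly `k`. -/
def DegEq (sp : SkewPoly R S σ δ) (im : Induced R S M N sp) (ν : N) (k : ℕ) : Prop :=
  ∃ c : ℕ →₀ M, pol sp im c = ν ∧ c k ≠ 0 ∧ ∀ i, k < i → c i = 0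

/-- `ν` is a good polynomial of degree `k`: whenever `ν·r ≠ 0` for `r ∈ R`,
`deg (ν·r) = deg ν = k`. -/
def GoodAt (sp : SkewPoly R S σ δ) (im : Induced R S M N sp) (ν : N) (k : ℕ) : Prop :=
  DegEq sp im ν k ∧ ∀ r : R, op (sp.ι r) • ν ≠ 0 → DegEq sp im (op (sp.ι r) • ν) k

/-- `ν` is a good polynomial. -/
def Good (sp : SkewPoly R S σ δ) (im : Induced R S M N sp) (ν : N) : Prop :=
  ∃ k, GoodAt sp im ν k

section Aux

lemma iter_one (σ : R ≃+* R) : ∀ k : ℕ, (⇑σ)^[k] (1 : R) = 1 := by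
  intro k; induction k with
  | zero => rfl
  | succ k ih => rw [Function.iterate_succ_apply', ih, map_one]

lemma iter_add (σ : R ≃+* R) (k : ℕ) (a b : R) :
    (⇑σ)^[k] (a + b) = (⇑σ)^[k] a + (⇑σ)^[k] b := by
  induction k with
  | zero => rfl
  | succ k ih => rw [Function.iterate_succ_apply', Function.iterate_succ_apply',
      Function.iterate_succ_apply', ih, map_add]

lemma iter_sub (σ : R ≃+* R) (k : ℕ) (a b : R) :
    (⇑σ)^[k] (a - b) = (⇑σ)^[k] a - (⇑σ)^[k] b := by
  induction k with
  | zero => rfl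
  | succ k ih => rw [Function.iterate_succ_apply', Function.iterate_succ_apply',
      Function.iterate_succ_apply', ih, map_sub]

lemma iter_mul (σ : R ≃+* R) (k : ℕ) (a b : R) :
    (⇑σ)^[k] (a * b) = (⇑σ)^[k] a * (⇑σ)^[k] b := by
  induction k with
  | zero => rfl
  | succ k ih => rw [Function.iterate_succ_apply', Function.iterate_succ_apply',
      Function.iterate_succ_apply', ih, map_mul]

/-- The embedding `n ↦ n + t` of `ℕ` into itself. -/
def natEmb (t : ℕ) : ℕ ↪ ℕ := ⟨fun n => n + t, add_left_injective t⟩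

/-- The map `c ↦ ∑ ι cᵢ xⁱ` as an additive hom. -/
def ringPolHom (sp : SkewPoly R S σ δ) : (ℕ →₀ R) →+ S where
  toFun c := c.sum fun i a => sp.ι a * sp.x ^ i
  map_zero' := Finsupp.sum_zero_index
  map_add' a b := by
    show (a + b).sum (fun i r => sp.ι r * sp.x ^ i) =
      (a.sum fun i r => sp.ι r * sp.x ^ i) + (b.sum fun i r => sp.ι r * sp.x ^ i)
    refine Finsupp.sum_add_index' (fun i => ?_) (fun i r1 r2 => ?_)
    · rw [map_zero, zero_mul]
    · rw [map_add, add_mul]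

/-- `pol` as an additive hom. -/
def polHom (sp : SkewPoly R S σ δ) (im : Induced R S M N sp) : (ℕ →₀ M) →+ N where
  toFun := pol sp im
  map_zero' := Finsupp.sum_zero_index
  map_add' a b := by
    show pol sp im (a + b) = pol sp im a + pol sp im b
    unfold pol
    refine Finsupp.sum_add_index' (fun i => ?_) (fun i m1 m2 => ?_)
    · rw [map_zero, smul_zero]
    · rw [map_add, smul_add]

/-- `pol` as an additive equivalence. -/
noncomputable def polEquiv (sp : SkewPoly R S σ δ) (im : Induced R S M N sp) :
    (ℕ →₀ M) ≃+ N :=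
  { Equiv.ofBijective (polHom sp im) im.free with map_add' := (polHom sp im).map_add }

lemma polEquiv_apply (sp : SkewPoly R S σ δ) (im : Induced R S M N sp) (c : ℕ →₀ M) :
    polEquiv sp im c = pol sp im c := rfl

lemma pol_symm (sp : SkewPoly R S σ δ) (im : Induced R S M N sp) (n : N) :
    pol sp im ((polEquiv sp im).symm n) = n := (polEquiv sp im).apply_symm_apply n

lemma symm_pol (sp : SkewPoly R S σ δ) (im : Induced R S M N sp) (c : ℕ →₀ M) :
    (polEquiv sp im).symm (pol sp im c) = c := (polEquiv sp im).symm_apply_apply c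

lemma pol_inj (sp : SkewPoly R S σ δ) (im : Induced R S M N sp) {a b : ℕ →₀ M}
    (h : pol sp im a = pol sp im b) : a = b := im.free.injective h

lemma pol_single (sp : SkewPoly R S σ δ) (im : Induced R S M N sp) (i : ℕ) (m : M) :
    pol sp im (Finsupp.single i m) = op (sp.x ^ i) • im.j m :=
  Finsupp.sum_single_index (by rw [map_zero, smul_zero])

lemma op_mul_smul {P : Type*} [AddCommGroup P] [Module Sᵐᵒᵖ P] (s t : S) (z : P) :
    op (s * t) • z = op t • (op s • z) := by rw [op_mul, mul_smul]

lemma smul_pol_x (sp : SkewPoly R S σ δ) (im : Induced R S M N sp) (t : ℕ) (c : ℕ →₀ M) :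
    op (sp.x ^ t) • pol sp im c = pol sp im (Finsupp.embDomain (natEmb t) c) := by
  rw [pol, pol, Finsupp.sum_embDomain, Finsupp.smul_sum]
  refine Finsupp.sum_congr fun i _ => ?_
  show _ = op (sp.x ^ (i + t)) • _
  rw [pow_add, op_mul_smul]

lemma embDomain_natEmb_apply (t : ℕ) (c : ℕ →₀ M) (j : ℕ) (hj : t ≤ j) :
    Finsupp.embDomain (natEmb t) c j = c (j - t) := by
  have h2 : natEmb t (j - t) = j := by simp only [natEmb, Function.Embedding.coeFn_mk]; omega
  conv_lhs => rw [← h2]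
  rw [Finsupp.embDomain_apply_self]

lemma dzero (hδ : IsSigmaDeriv σ δ) : δ 0 = 0 := by
  have h := hδ.1 0 0
  rw [add_zero] at h
  exact left_eq_add.mp h

lemma expand {P : Type*} [AddCommGroup P] [Module Sᵐᵒᵖ P] (sp : SkewPoly R S σ δ) (i : ℕ)
    (a : ℕ →₀ R) (z : P) :
    op (sp.x ^ i * ringPolHom sp a) • z
      = a.sum fun t b => op (sp.x ^ t) • (op (sp.x ^ i * sp.ι b) • z) := by
  show op (sp.x ^ i * a.sum fun t b => sp.ι b * sp.x ^ t) • z = _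
  rw [Finsupp.sum, Finsupp.sum, Finset.mul_sum, Finset.op_sum, Finset.sum_smul]
  refine Finset.sum_congr rfl fun t _ => ?_
  rw [← mul_assoc, op_mul_smul]

lemma ring_key (sp : SkewPoly R S σ δ) (hδ : IsSigmaDeriv σ δ) :
    ∀ (i : ℕ) (r : R), ∃ c : ℕ →₀ R, ringPolHom sp c = sp.x ^ i * sp.ι r ∧
      c i = (⇑σ)^[i] r ∧ ∀ j, i < j → c j = 0 := by
  intro i
  induction i with
  | zero =>
    intro r
    refine ⟨Finsupp.single 0 r, ?_, by simp, fun j hj => ?_⟩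
    · show (Finsupp.single 0 r).sum (fun i a => sp.ι a * sp.x ^ i) = _
      rw [Finsupp.sum_single_index (by rw [map_zero, zero_mul]), pow_zero, mul_one, one_mul]
    · rw [Finsupp.single_apply, if_neg (by omega)]
  | succ i ih =>
    intro r
    obtain ⟨c, hcsum, hci, hctop⟩ := ih r
    refine ⟨Finsupp.embDomain (natEmb 1) (c.mapRange σ (map_zero σ)) +
        c.mapRange δ (dzero hδ), ?_, ?_, ?_⟩
    · rw [map_add]
      have h1 : ringPolHom sp (Finsupp.embDomain (natEmb 1) (c.mapRange σ (map_zero σ)))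
          = c.sum fun t a => sp.ι (σ a) * sp.x ^ (t + 1) := by
        show (Finsupp.embDomain (natEmb 1) (c.mapRange σ (map_zero σ))).sum
            (fun t a => sp.ι a * sp.x ^ t) = _
        rw [Finsupp.sum_embDomain]
        exact Finsupp.sum_mapRange_index (fun t => by rw [map_zero, zero_mul])
      have h2 : ringPolHom sp (c.mapRange δ (dzero hδ))
          = c.sum fun t a => sp.ι (δ a) * sp.x ^ t := by
        show (c.mapRange δ (dzero hδ)).sum (fun t a => sp.ι a * sp.x ^ t) = _
        exact Finsupp.sum_mapRange_index (fun t => by rw [map_zero, zero_mul])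
      rw [h1, h2]
      have h3 : sp.x ^ (i + 1) * sp.ι r = sp.x * (sp.x ^ i * sp.ι r) := by
        rw [← mul_assoc, ← pow_succ']
      rw [h3, ← hcsum]
      show _ = sp.x * c.sum fun t a => sp.ι a * sp.x ^ t
      rw [Finsupp.sum, Finsupp.sum, Finsupp.sum, Finset.mul_sum, ← Finset.sum_add_distrib]
      refine Finset.sum_congr rfl fun t _ => ?_
      rw [← mul_assoc, sp.comm, add_mul, mul_assoc, ← pow_succ']
    · rw [Finsupp.add_apply, embDomain_natEmb_apply 1 _ (i + 1) (by omega)]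
      simp only [Nat.add_sub_cancel, Finsupp.mapRange_apply]
      rw [hci, hctop (i + 1) (by omega), dzero hδ, add_zero,
        ← Function.iterate_succ_apply' σ]
    · intro j hj
      rw [Finsupp.add_apply, embDomain_natEmb_apply 1 _ j (by omega),
        Finsupp.mapRange_apply, Finsupp.mapRange_apply, hctop (j - 1) (by omega),
        hctop j (by omega), map_zero, dzero hδ, add_zero]

lemma sum_single_eval (c : ℕ →₀ R) (g : ℕ → R → M) (hg : ∀ t, g t 0 = 0) (jj : ℕ) :
    (c.sum fun t a => Finsupp.single t (g t a)) jj = g jj (c jj) := by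
  classical
  rw [Finsupp.sum_apply]
  simp only [Finsupp.single_apply]
  rw [Finsupp.sum_ite_eq']
  split
  · rfl
  · next h =>
    rw [Finsupp.notMem_support_iff.mp h, hg]

lemma exp_smul {P : Type*} [AddCommGroup P] [Module Sᵐᵒᵖ P] (sp : SkewPoly R S σ δ)
    (c : ℕ →₀ R) (z : P) :
    op (ringPolHom sp c) • z = c.sum fun t a => op (sp.x ^ t) • (op (sp.ι a) • z) := by
  show op (c.sum fun t a => sp.ι a * sp.x ^ t) • z = _
  rw [Finsupp.sum, Finsupp.sum, Finset.op_sum, Finset.sum_smul]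
  refine Finset.sum_congr rfl fun t _ => ?_
  rw [op_mul_smul]

lemma pol_of_ring (sp : SkewPoly R S σ δ) (im : Induced R S M N sp) (c : ℕ →₀ R) (m : M) :
    pol sp im (c.sum fun t a => Finsupp.single t (op a • m)) = op (ringPolHom sp c) • im.j m := by
  rw [exp_smul, show pol sp im = ⇑(polHom sp im) from rfl, map_finsuppSum]
  refine Finsupp.sum_congr fun t _ => ?_
  show pol sp im _ = _
  rw [pol_single, im.j_smul]

lemma mod_key (sp : SkewPoly R S σ δ) (im : Induced R S M N sp) (hδ : IsSigmaDeriv σ δ)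
    (i : ℕ) (r : R) (m : M) :
    ∃ cm : ℕ →₀ M, pol sp im cm = op (sp.x ^ i * sp.ι r) • im.j m ∧
      cm i = op ((⇑σ)^[i] r) • m ∧ ∀ j, i < j → cm j = 0 := by
  obtain ⟨c, hcsum, hci, hctop⟩ := ring_key sp hδ i r
  refine ⟨c.sum fun t a => Finsupp.single t (op a • m), by rw [pol_of_ring, hcsum], ?_, ?_⟩
  · rw [sum_single_eval _ _ (fun t => by rw [op_zero, zero_smul]), hci]
  · intro j hj
    rw [sum_single_eval _ _ (fun t => by rw [op_zero, zero_smul]), hctop j hj,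
      op_zero, zero_smul]

lemma mul_r (sp : SkewPoly R S σ δ) (im : Induced R S M N sp) (hδ : IsSigmaDeriv σ δ)
    (c : ℕ →₀ M) (r : R) (k : ℕ) (hd : ∀ j, k < j → c j = 0) :
    ∃ c' : ℕ →₀ M, pol sp im c' = op (sp.ι r) • pol sp im c ∧
      c' k = op ((⇑σ)^[k] r) • c k ∧ ∀ j, k < j → c' j = 0 := by
  classical
  choose cm hcm hcmk hcmtop using fun i : ℕ => mod_key sp im hδ i r (c i)
  refine ⟨∑ i ∈ c.support, cm i, ?_, ?_, ?_⟩
  · have h0 : op (sp.ι r) • pol sp im c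
        = ∑ i ∈ c.support, op (sp.x ^ i * sp.ι r) • im.j (c i) := by
      rw [pol, Finsupp.sum, Finset.smul_sum]
      refine Finset.sum_congr rfl fun i _ => ?_
      rw [op_mul_smul]
    rw [h0, show pol sp im = ⇑(polHom sp im) from rfl, map_sum]
    exact Finset.sum_congr rfl fun i _ => hcm i
  · rw [Finsupp.finset_sum_apply]
    refine Finset.sum_eq_single k (fun b hb hbk => ?_) (fun hk => ?_) |>.trans (hcmk k)
    · have hble : b ≤ k := by
        by_contra h
        exact (Finsupp.mem_support_iff.mp hb) (hd b (by omega))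
      exact hcmtop b k (by omega)
    · rw [hcmk k, Finsupp.notMem_support_iff.mp hk, smul_zero]
  · intro j hj
    rw [Finsupp.finset_sum_apply]
    refine Finset.sum_eq_zero fun i hi => ?_
    refine hcmtop i j ?_
    have := Finsupp.mem_support_iff.mp hi
    by_contra h
    exact this (hd i (by omega))

end Aux

/-- if `m` is a good polynomial of degree `k` with leading coefficient `m_k`,
then the cyclic right `S`-module `m·S` is isomorphic to `⟨m_k⟩_{σᵏ} ⊗_R S`. Here
`⟨m_k⟩_{σᵏ}` is presented as a right `R`-module `M'` embedding in `M` via `e`, twisted by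
`σᵏ` and with image the cyclic twisted submodule generated by `m_k`, and the induced module
`⟨m_k⟩_{σᵏ} ⊗_R S` is presented as `N'`. -/
theorem stmt7 (sp : SkewPoly R S σ δ) (im : Induced R S M N sp) (hδ : IsSigmaDeriv σ δ)
    (ν : N) (k : ℕ) (c : ℕ →₀ M) (hc : pol sp im c = ν) (hk : c k ≠ 0)
    (htop : ∀ i, k < i → c i = 0) (hgood : GoodAt sp im ν k)
    (M' N' : Type) [AddCommGroup M'] [Module Rᵐᵒᵖ M'] [AddCommGroup N'] [Module Sᵐᵒᵖ N']
    (e : M' →+ M) (he_inj : Function.Injective e)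
    (he_twist : ∀ (r : R) (m' : M'), e (op r • m') = op ((⇑σ)^[k] r) • e m')
    (he_range : ∀ m : M, (∃ m' : M', e m' = m) ↔ ∃ r : R, m = op ((⇑σ)^[k] r) • c k)
    (im' : Induced R S M' N' sp) :
    Nonempty ((↥(Submodule.span Sᵐᵒᵖ ({ν} : Set N))) ≃ₗ[Sᵐᵒᵖ] N') := by
  classical
  have iter1 : (⇑σ)^[k] (1 : R) = 1 := iter_one σ k
  -- the annihilator property coming from goodness
  have ann : ∀ r : R, op ((⇑σ)^[k] r) • c k = 0 → op (sp.ι r) • ν = 0 := by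
    intro r h0
    by_contra hne
    obtain ⟨c₁, hpol₁, hk₁, _⟩ := hgood.2 r hne
    obtain ⟨c₂, hpol₂, hk₂, _⟩ := mul_r sp im hδ c r k htop
    rw [hc] at hpol₂
    have hcc : c₁ = c₂ := pol_inj sp im (hpol₁.trans hpol₂.symm)
    rw [hcc] at hk₁
    exact hk₁ (hk₂.trans (by rw [h0]))
  have fcong : ∀ r₁ r₂ : R, op ((⇑σ)^[k] r₁) • c k = op ((⇑σ)^[k] r₂) • c k →
      op (sp.ι r₁) • ν = op (sp.ι r₂) • ν := by
    intro r₁ r₂ h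
    have h2 := ann (r₁ - r₂) (by rw [iter_sub, op_sub, sub_smul, h, sub_self])
    rw [map_sub, op_sub, sub_smul] at h2
    exact sub_eq_zero.mp h2
  -- choice of scalars witnessing membership in the cyclic twisted module
  have hrange' : ∀ m' : M', ∃ r : R, e m' = op ((⇑σ)^[k] r) • c k := fun m' =>
    (he_range (e m')).mp ⟨m', rfl⟩
  choose ρ hρ using hrange'
  obtain ⟨m0, hm0⟩ : ∃ m0 : M', e m0 = c k :=
    (he_range (c k)).mpr ⟨1, by rw [iter1, op_one, one_smul]⟩
  have hcyc : ∀ m' : M', m' = op (ρ m') • m0 := by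
    intro m'
    apply he_inj
    rw [he_twist, hm0, ← hρ m']
  have hann' : ∀ r : R, op ((⇑σ)^[k] r) • c k = 0 → op r • m0 = 0 := by
    intro r h0
    apply he_inj
    rw [he_twist, hm0, h0, map_zero]
  -- the map f : M' → N
  set f : M' → N := fun m' => op (sp.ι (ρ m')) • ν with hfdef
  have hf_op : ∀ (a : R) (m' : M'), f (op a • m') = op (sp.ι a) • f m' := by
    intro a m'
    have h1 : op ((⇑σ)^[k] (ρ (op a • m'))) • c k = op ((⇑σ)^[k] (ρ m' * a)) • c k := by
      rw [← hρ, he_twist, hρ m', iter_mul, op_mul, mul_smul]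
    have h2 := fcong _ _ h1
    show op (sp.ι (ρ (op a • m'))) • ν = op (sp.ι a) • (op (sp.ι (ρ m')) • ν)
    rw [h2, map_mul, op_mul, mul_smul]
  have hf_add : ∀ m₁ m₂ : M', f (m₁ + m₂) = f m₁ + f m₂ := by
    intro m₁ m₂
    have h1 : op ((⇑σ)^[k] (ρ (m₁ + m₂))) • c k = op ((⇑σ)^[k] (ρ m₁ + ρ m₂)) • c k := by
      rw [← hρ, map_add, hρ m₁, hρ m₂, iter_add, op_add, add_smul]
    have h2 := fcong _ _ h1
    show op (sp.ι (ρ (m₁ + m₂))) • ν = op (sp.ι (ρ m₁)) • ν + op (sp.ι (ρ m₂)) • ν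
    rw [h2, map_add, op_add, add_smul]
  have hf0 : f 0 = 0 := by
    have h := hf_add 0 0
    rw [add_zero] at h
    exact left_eq_add.mp h
  have hfm0 : f m0 = ν := by
    have h1 : op ((⇑σ)^[k] (ρ m0)) • c k = op ((⇑σ)^[k] (1 : R)) • c k := by
      rw [← hρ, hm0, iter1, op_one, one_smul]
    have h2 := fcong _ _ h1
    show op (sp.ι (ρ m0)) • ν = ν
    rw [h2, map_one, op_one, one_smul]
  -- the additive map φ : N' → N
  set fA : M' →+ N := AddMonoidHom.mk' f hf_add with hfA
  set Φ : (ℕ →₀ M') →+ N :=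
    Finsupp.liftAddHom (fun i => (DistribMulAction.toAddMonoidHom N (op (sp.x ^ i))).comp fA)
    with hΦdef
  set φ : N' →+ N := Φ.comp (polEquiv sp im').symm.toAddMonoidHom with hφdef
  have hΦ : ∀ cc : ℕ →₀ M', Φ cc = cc.sum fun i m' => op (sp.x ^ i) • f m' := fun cc =>
    Finsupp.liftAddHom_apply _ _
  have hφ_pol : ∀ cc : ℕ →₀ M', φ (pol sp im' cc) = cc.sum fun i m' => op (sp.x ^ i) • f m' := by
    intro cc
    show Φ ((polEquiv sp im').symm (pol sp im' cc)) = _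
    rw [symm_pol]
    exact hΦ cc
  have hφ_single : ∀ (i : ℕ) (m' : M'), φ (op (sp.x ^ i) • im'.j m') = op (sp.x ^ i) • f m' := by
    intro i m'
    rw [← pol_single sp im', hφ_pol, Finsupp.sum_single_index (by rw [hf0, smul_zero])]
  have hφj' : ∀ m' : M', φ (im'.j m') = f m' := by
    intro m'
    have h := hφ_single 0 m'
    rwa [pow_zero, op_one, one_smul, one_smul] at h
  have hφj : φ (im'.j m0) = ν := by rw [hφj', hfm0]
  have hφ_x : ∀ (t : ℕ) (n' : N'), φ (op (sp.x ^ t) • n') = op (sp.x ^ t) • φ n' := by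
    intro t n'
    obtain ⟨cc, rfl⟩ : ∃ cc, pol sp im' cc = n' := ⟨_, pol_symm sp im' n'⟩
    rw [smul_pol_x, hφ_pol, hφ_pol, Finsupp.sum_embDomain, Finsupp.smul_sum]
    refine Finsupp.sum_congr fun i _ => ?_
    show op (sp.x ^ (i + t)) • f _ = _
    rw [pow_add, op_mul_smul]
  have hφ_key : ∀ (i : ℕ) (a : R) (m' : M'),
      φ (op (sp.x ^ i * sp.ι a) • im'.j m') = op (sp.x ^ i * sp.ι a) • f m' := by
    intro i a m'
    obtain ⟨rc, hrc, _, _⟩ := ring_key sp hδ i a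
    rw [← hrc, exp_smul sp rc (im'.j m'), exp_smul sp rc (f m'), map_finsuppSum]
    refine Finsupp.sum_congr fun t _ => ?_
    rw [hφ_x, ← im'.j_smul, hφj', hf_op]
  have hφ_lin : ∀ (s : S) (n' : N'), φ (op s • n') = op s • φ n' := by
    intro s n'
    obtain ⟨a, ha⟩ : ∃ a, ringPolHom sp a = s := sp.basis.surjective s
    obtain ⟨cc, rfl⟩ : ∃ cc, pol sp im' cc = n' := ⟨_, pol_symm sp im' n'⟩
    have hterm : ∀ (i : ℕ) (m' : M'),
        φ (op s • (op (sp.x ^ i) • im'.j m')) = op s • (op (sp.x ^ i) • f m') := by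
      intro i m'
      rw [← mul_smul, ← op_mul, ← mul_smul, ← op_mul, ← ha,
        expand sp i a (im'.j m'), expand sp i a (f m'), map_finsuppSum]
      refine Finsupp.sum_congr fun t _ => ?_
      rw [hφ_x, hφ_key]
    rw [hφ_pol, pol, Finsupp.smul_sum, Finsupp.smul_sum, map_finsuppSum]
    exact Finsupp.sum_congr fun i _ => hterm i (cc i)
  -- kernel of φ is trivial
  have hker : ∀ n' : N', φ n' = 0 → n' = 0 := by
    intro n' h0
    have hn' : pol sp im' ((polEquiv sp im').symm n') = n' := pol_symm sp im' n'
    set cc : ℕ →₀ M' := (polEquiv sp im').symm n' with hccdef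
    have hφn : ∑ i ∈ cc.support, op (sp.x ^ i) • (op (sp.ι (ρ (cc i))) • ν) = 0 := by
      rw [← h0, ← hn', hφ_pol, Finsupp.sum]
    have hzero : ∀ i ∈ cc.support, op ((⇑σ)^[k] (ρ (cc i))) • c k = 0 := by
      by_contra hcon
      push_neg at hcon
      obtain ⟨i₀, hi₀s, hi₀⟩ := hcon
      set T := cc.support.filter (fun i => op ((⇑σ)^[k] (ρ (cc i))) • c k ≠ 0) with hTdef
      have hTne : T.Nonempty := ⟨i₀, Finset.mem_filter.mpr ⟨hi₀s, hi₀⟩⟩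
      set d := T.max' hTne with hddef
      have hdT : d ∈ T := T.max'_mem hTne
      have hsum : ∑ i ∈ T, op (sp.x ^ i) • (op (sp.ι (ρ (cc i))) • ν) = 0 := by
        rw [← hφn]
        refine Finset.sum_filter_of_ne fun i _ hne0 => ?_
        by_contra hz
        exact hne0 (by rw [ann _ hz, smul_zero])
      choose ci hci hcik hcitop using fun r : R => mul_r sp im hδ c r k htop
      have h2 : ∑ i ∈ T, Finsupp.embDomain (natEmb i) (ci (ρ (cc i))) = 0 := by
        apply pol_inj sp im
        rw [show pol sp im = ⇑(polHom sp im) from rfl, map_sum, map_zero, ← hsum]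
        refine Finset.sum_congr rfl fun i _ => ?_
        show pol sp im _ = _
        rw [← smul_pol_x, hci, hc]
      have h4 : ∑ i ∈ T, (Finsupp.embDomain (natEmb i) (ci (ρ (cc i)))) (k + d) = 0 := by
        rw [← Finsupp.finset_sum_apply, h2, Finsupp.coe_zero, Pi.zero_apply]
      have h5 : ∀ i ∈ T, i ≤ d := fun i hi => Finset.le_max' T i hi
      have h6 : ∑ i ∈ T, (Finsupp.embDomain (natEmb i) (ci (ρ (cc i)))) (k + d)
          = op ((⇑σ)^[k] (ρ (cc d))) • c k := by
        rw [Finset.sum_eq_single_of_mem d hdT (fun b hb hbd => ?_)]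
        · rw [embDomain_natEmb_apply d _ (k + d) (by omega),
            show k + d - d = k from by omega, hcik]
        · rw [embDomain_natEmb_apply b _ (k + d) (by have := h5 b hb; omega),
            hcitop _ (k + d - b) (by have h5' := h5 b hb; omega)]
      rw [h4] at h6
      exact (Finset.mem_filter.mp hdT).2 h6.symm
    have hcc0 : cc = 0 := by
      ext i
      simp only [Finsupp.coe_zero, Pi.zero_apply]
      by_contra hne
      have hi : i ∈ cc.support := Finsupp.mem_support_iff.mpr hne
      have h0' := hann' _ (hzero i hi)
      rw [hcyc (cc i), h0'] at hne
      exact hne rfl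
    rw [← hn', hcc0]
    show polHom sp im' 0 = 0
    exact map_zero _
  -- range of φ is the span of ν
  have hspan : ∀ n' : N', φ n' ∈ Submodule.span Sᵐᵒᵖ ({ν} : Set N) := by
    intro n'
    obtain ⟨cc, rfl⟩ : ∃ cc, pol sp im' cc = n' := ⟨_, pol_symm sp im' n'⟩
    rw [hφ_pol, Finsupp.sum]
    refine Submodule.sum_mem _ fun i _ => ?_
    rw [hcyc (cc i), hf_op, hfm0, ← mul_smul, ← op_mul]
    exact Submodule.smul_mem _ _ (Submodule.mem_span_singleton_self ν)
  -- assemble the linear equivalence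
  let φL : N' →ₗ[Sᵐᵒᵖ] N :=
    { toFun := φ, map_add' := φ.map_add,
      map_smul' := fun s n' => hφ_lin (unop s) n' }
  have hinj : Function.Injective φL := by
    intro a b hab
    have h := hker (a - b) (by rw [show φ (a - b) = φL (a - b) from rfl, map_sub, hab, sub_self])
    exact sub_eq_zero.mp h
  have hrange : LinearMap.range φL = Submodule.span Sᵐᵒᵖ ({ν} : Set N) := by
    apply le_antisymm
    · rintro _ ⟨n', rfl⟩
      exact hspan n'
    · rw [Submodule.span_singleton_le_iff_mem]
      exact ⟨im'.j m0, hφj⟩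
  exact ⟨((LinearEquiv.ofInjective φL hinj).trans (LinearEquiv.ofEq _ _ hrange)).symm⟩
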